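/- Let (A,[.,.,.]) be a finite-dimensional 3-Lie algebra with basis e1,...,en and dual basis e1*,...,en* of A*, and let T : A → A be a linear map. Then T is an O-operator with respect to the adjoint representation if and only if r := Σ_i (e_i* ⊗ T(e_i) − T(e_i) ⊗ e_i*) is a skew-symmetric solution of the 3-Lie classical Yang-Baxter equation in the semidirect product 3-Lie algebra A ⋉_{ad*} A*. -/

import Mathlib

/-!
Both sides are read off from the coordinates of `[[r, r, r]]`. By skew-symmetry of `r`, the
`(α, β, γ, δ)`-coordinate is an alternating sum of four brackets, in `A ⋉_{ad*} A*`, of the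
rows `r(α, ·)`, and these rows are `T eₐ ∈ A` (for `α = eₐ*`) and `-Tᵗ eₜ* ∈ A*` (for
`α = eₜ`). The bracket of the semidirect product kills two entries from `A*`, so only the
coordinates with exactly one index in `A` survive; each of them is, up to sign and one use of
the skew-symmetry of the bracket, the `eₜ`-coordinate of the defect
`[T eₐ, T e_b, T e_c] - T([T eₐ, T e_b, e_c] + [T e_b, T e_c, eₐ] + [T e_c, T eₐ, e_b])`.
As the defect is trilinear, it vanishes identically iff it vanishes on the basis.
-/

open Finset

/-- The standard basis of `ℂⁿ`. -/
def e {n : ℕ} (i : Fin n) : Fin n → ℂ := fun j => if j = i then 1 else 0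

/-- Index set of the semidirect product `A ⋉_{ad*} A*`: `inl` indexes the basis of `A`,
`inr` indexes the dual basis of `A*`. -/
abbrev idx (n : ℕ) := Fin n ⊕ Fin n

/-- Structure constants of the semidirect product `A ⋉_{ad*} A*`, where `C` are the
structure constants of `A`: `[eᵢ,eⱼ,eₖ] = Σ C i j k t • eₜ` and the coadjoint action
satisfies `⟨ad*(x,y)α, z⟩ = −⟨α,[x,y,z]⟩`. -/
def D {n : ℕ} (C : Fin n → Fin n → Fin n → Fin n → ℂ) :
    idx n → idx n → idx n → idx n → ℂ
  | .inl i, .inl j, .inl k, .inl t => C i j k t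
  | .inl i, .inl j, .inr k, .inr t => -C i j t k
  | .inl i, .inr j, .inl k, .inr t => -C k i t j
  | .inr i, .inl j, .inl k, .inr t => -C j k t i
  | _, _, _, _ => 0

/-- Coordinates of the tensor `r = Σᵢ (eᵢ* ⊗ T eᵢ − T eᵢ ⊗ eᵢ*)` in `g ⊗ g`,
`g = A ⋉_{ad*} A*`. -/
def R {n : ℕ} (T : (Fin n → ℂ) →ₗ[ℂ] (Fin n → ℂ)) : idx n → idx n → ℂ
  | .inr i, .inl j => T (e i) j
  | .inl j, .inr i => -(T (e i) j)
  | _, _ => 0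

variable {n : ℕ}

lemma sum_smul_e (x : Fin n → ℂ) : ∑ a, x a • e a = x := by
  funext j; simp [e]

lemma e_eq_single (i : Fin n) : e i = Pi.single i 1 := by
  funext j; simp [e, Pi.single_apply]

lemma dotProduct_apply_e (T : (Fin n → ℂ) →ₗ[ℂ] (Fin n → ℂ)) (v : Fin n → ℂ) (t : Fin n) :
    (fun s => T (e s) t) ⬝ᵥ v = T v t := by
  simpa [e_eq_single, Matrix.mulVec, LinearMap.toMatrix'_apply] using
    congrFun (LinearMap.toMatrix'_mulVec T v) t

def sdBracket (C : Fin n → Fin n → Fin n → Fin n → ℂ) (u v w : idx n → ℂ) (α : idx n) : ℂ :=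
  ∑ i, ∑ j, ∑ k, u i * v j * w k * D C i j k α

section StructureConstants

variable {f : (Fin n → ℂ) →ₗ[ℂ] (Fin n → ℂ) →ₗ[ℂ] (Fin n → ℂ) →ₗ[ℂ] (Fin n → ℂ)}
  {C : Fin n → Fin n → Fin n → Fin n → ℂ}

lemma apply_eq_sum_structConst (hC : ∀ i j k, f (e i) (e j) (e k) = ∑ t, C i j k t • e t)
    (u v w : Fin n → ℂ) (t : Fin n) :
    f u v w t = ∑ i, ∑ j, ∑ k, u i * v j * w k * C i j k t := by
  conv_lhs => rw [← sum_smul_e u, ← sum_smul_e v, ← sum_smul_e w]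
  simp only [map_sum, map_smul, LinearMap.coe_sum, Finset.sum_apply, LinearMap.smul_apply,
    Pi.smul_apply, smul_eq_mul, hC, e, mul_ite, mul_one, mul_zero, sum_ite_eq, mem_univ,
    if_true, mul_sum]
  rw [sum_comm_cycle]
  refine sum_congr rfl fun i _ => sum_comm.trans ?_
  exact sum_congr rfl fun j _ => sum_congr rfl fun k _ => by ring

lemma dotProduct_apply_eq_sum (hC : ∀ i j k, f (e i) (e j) (e k) = ∑ t, C i j k t • e t)
    (ξ x y : Fin n → ℂ) (t : Fin n) :
    ξ ⬝ᵥ f x y (e t) = ∑ k, ∑ i, ∑ j, ξ k * x i * y j * C i j t k := by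
  simp only [dotProduct, apply_eq_sum_structConst hC, e, mul_ite, mul_one, mul_zero, ite_mul,
    zero_mul, sum_ite_eq', mem_univ, if_true, mul_sum, mul_assoc]

lemma sdBracket_inl (hC : ∀ i j k, f (e i) (e j) (e k) = ∑ t, C i j k t • e t)
    (x₁ x₂ x₃ ξ₁ ξ₂ ξ₃ : Fin n → ℂ) (t : Fin n) :
    sdBracket C (Sum.elim x₁ ξ₁) (Sum.elim x₂ ξ₂) (Sum.elim x₃ ξ₃) (.inl t) = f x₁ x₂ x₃ t := by
  simp [sdBracket, Fintype.sum_sum_type, D, apply_eq_sum_structConst hC]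

/-- The `A*`-component of `[x₁ + ξ₁, x₂ + ξ₂, x₃ + ξ₃]` is
`ad*(x₂, x₃) ξ₁ + ad*(x₃, x₁) ξ₂ + ad*(x₁, x₂) ξ₃`, with `⟨ad*(x, y) ξ, eₜ⟩ = -⟨ξ, [x, y, eₜ]⟩`. -/
lemma sdBracket_inr (hC : ∀ i j k, f (e i) (e j) (e k) = ∑ t, C i j k t • e t)
    (x₁ x₂ x₃ ξ₁ ξ₂ ξ₃ : Fin n → ℂ) (t : Fin n) :
    sdBracket C (Sum.elim x₁ ξ₁) (Sum.elim x₂ ξ₂) (Sum.elim x₃ ξ₃) (.inr t) =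
      -(ξ₁ ⬝ᵥ f x₂ x₃ (e t) + ξ₂ ⬝ᵥ f x₃ x₁ (e t) + ξ₃ ⬝ᵥ f x₁ x₂ (e t)) := by
  simp only [sdBracket, Fintype.sum_sum_type, Sum.elim_inl, Sum.elim_inr, D, mul_zero,
    sum_const_zero, add_zero, zero_add, mul_neg, sum_neg_distrib, sum_add_distrib,
    dotProduct_apply_eq_sum hC, neg_add]
  congr 2
  · rw [neg_inj, ← sum_comm_cycle]
    exact sum_congr rfl fun _ _ => sum_congr rfl fun _ _ => sum_congr rfl fun _ _ => by ring
  · rw [sum_comm_cycle]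
    exact sum_congr rfl fun _ _ => sum_congr rfl fun _ _ => sum_congr rfl fun _ _ => by ring

end StructureConstants

lemma R_skew (T : (Fin n → ℂ) →ₗ[ℂ] (Fin n → ℂ)) (p q : idx n) : R T p q = -R T q p := by
  rcases p with p | p <;> rcases q with q | q <;> simp [R]

lemma R_inl (T : (Fin n → ℂ) →ₗ[ℂ] (Fin n → ℂ)) (t : Fin n) :
    R T (.inl t) = Sum.elim (0 : Fin n → ℂ) (-fun s => T (e s) t) := by
  ext (i | i) <;> rfl

lemma R_inr (T : (Fin n → ℂ) →ₗ[ℂ] (Fin n → ℂ)) (a : Fin n) :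
    R T (.inr a) = Sum.elim (T (e a)) (0 : Fin n → ℂ) := by
  ext (i | i) <;> rfl

/-- The `(α, β, γ, δ)`-coordinate of `[[r, r, r]]` for `r = R T`. -/
def cybeCoord (C : Fin n → Fin n → Fin n → Fin n → ℂ) (T : (Fin n → ℂ) →ₗ[ℂ] (Fin n → ℂ))
    (α β γ δ : idx n) : ℂ :=
  (∑ i : idx n, ∑ j : idx n, ∑ k : idx n, R T i β * R T j γ * R T k δ * D C i j k α)
  + (∑ i : idx n, ∑ j : idx n, ∑ k : idx n, R T α i * R T j γ * R T k δ * D C i j k β)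
  + (∑ i : idx n, ∑ j : idx n, ∑ k : idx n, R T α i * R T β j * R T k δ * D C i j k γ)
  + (∑ i : idx n, ∑ j : idx n, ∑ k : idx n, R T α i * R T β j * R T γ k * D C i j k δ)

lemma cybeCoord_eq (C : Fin n → Fin n → Fin n → Fin n → ℂ) (T : (Fin n → ℂ) →ₗ[ℂ] (Fin n → ℂ))
    (α β γ δ : idx n) :
    cybeCoord C T α β γ δ =
      -sdBracket C (R T β) (R T γ) (R T δ) α + sdBracket C (R T α) (R T γ) (R T δ) β
        - sdBracket C (R T α) (R T β) (R T δ) γ + sdBracket C (R T α) (R T β) (R T γ) δ := by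
  simp_rw [cybeCoord, R_skew T _ β, R_skew T _ γ, R_skew T _ δ]
  simp only [sdBracket, neg_mul, mul_neg, neg_neg, sum_neg_distrib]
  ring

section OOperator

variable (f : (Fin n → ℂ) →ₗ[ℂ] (Fin n → ℂ) →ₗ[ℂ] (Fin n → ℂ) →ₗ[ℂ] (Fin n → ℂ))
  (T : (Fin n → ℂ) →ₗ[ℂ] (Fin n → ℂ))

def IsOOperator : Prop :=
  ∀ x y z, f (T x) (T y) (T z) = T (f (T x) (T y) z + f (T y) (T z) x + f (T z) (T x) y)

def oDefect (x y z : Fin n → ℂ) : Fin n → ℂ :=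
  f (T x) (T y) (T z) - T (f (T x) (T y) z + f (T y) (T z) x + f (T z) (T x) y)

lemma oDefect_eq_sum_left (x y z : Fin n → ℂ) :
    oDefect f T x y z = ∑ a, x a • oDefect f T (e a) y z := by
  conv_lhs => rw [← sum_smul_e x]
  simp [oDefect, smul_sub, smul_add, sum_sub_distrib, sum_add_distrib]

lemma oDefect_eq_sum_middle (x y z : Fin n → ℂ) :
    oDefect f T x y z = ∑ b, y b • oDefect f T x (e b) z := by
  conv_lhs => rw [← sum_smul_e y]
  simp [oDefect, smul_sub, smul_add, sum_sub_distrib, sum_add_distrib]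

lemma oDefect_eq_sum_right (x y z : Fin n → ℂ) :
    oDefect f T x y z = ∑ c, z c • oDefect f T x y (e c) := by
  conv_lhs => rw [← sum_smul_e z]
  simp [oDefect, smul_sub, smul_add, sum_sub_distrib, sum_add_distrib]

lemma isOOperator_iff_oDefect_e :
    IsOOperator f T ↔ ∀ a b c, oDefect f T (e a) (e b) (e c) = 0 := by
  refine ⟨fun h a b c => sub_eq_zero.mpr (h _ _ _), fun h x y z => sub_eq_zero.mp ?_⟩
  change oDefect f T x y z = 0
  rw [oDefect_eq_sum_left]
  refine sum_eq_zero fun a _ => smul_eq_zero_of_right _ ?_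
  rw [oDefect_eq_sum_middle]
  refine sum_eq_zero fun b _ => smul_eq_zero_of_right _ ?_
  rw [oDefect_eq_sum_right]
  exact sum_eq_zero fun c _ => smul_eq_zero_of_right _ (h a b c)

end OOperator

section CYBE

variable {f : (Fin n → ℂ) →ₗ[ℂ] (Fin n → ℂ) →ₗ[ℂ] (Fin n → ℂ) →ₗ[ℂ] (Fin n → ℂ)}
  {C : Fin n → Fin n → Fin n → Fin n → ℂ} (T : (Fin n → ℂ) →ₗ[ℂ] (Fin n → ℂ))

lemma cybeCoord_inr_inr_inr_inl (hskew : ∀ x y z, f x y z = - f y x z)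
    (hC : ∀ i j k, f (e i) (e j) (e k) = ∑ t, C i j k t • e t) (a b c t : Fin n) :
    cybeCoord C T (.inr a) (.inr b) (.inr c) (.inl t) = oDefect f T (e a) (e b) (e c) t := by
  simp only [cybeCoord_eq, R_inl, R_inr, sdBracket_inl hC, sdBracket_inr hC, zero_dotProduct,
    neg_dotProduct, dotProduct_apply_e, map_zero, LinearMap.zero_apply, oDefect, Pi.sub_apply,
    map_add, Pi.add_apply, hskew (T (e a)) (T (e c)), map_neg, Pi.neg_apply]
  ring

lemma cybeCoord_eq_zero (hskew : ∀ x y z, f x y z = - f y x z)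
    (hC : ∀ i j k, f (e i) (e j) (e k) = ∑ t, C i j k t • e t)
    (hT : ∀ a b c, oDefect f T (e a) (e b) (e c) = 0) (α β γ δ : idx n) :
    cybeCoord C T α β γ δ = 0 := by
  have hO (a b c t : Fin n) : f (T (e a)) (T (e b)) (T (e c)) t = T (f (T (e a)) (T (e b)) (e c)) t
      + T (f (T (e b)) (T (e c)) (e a)) t + T (f (T (e c)) (T (e a)) (e b)) t := by
    simpa [oDefect, sub_eq_zero] using congrFun (hT a b c) t
  have hS (u v w : Fin n → ℂ) (t : Fin n) : T (f u v w) t = -T (f v u w) t := by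
    rw [hskew, map_neg, Pi.neg_apply]
  rcases α with α | α <;> rcases β with β | β <;> rcases γ with γ | γ <;> rcases δ with δ | δ <;>
  simp only [cybeCoord_eq, R_inl, R_inr, sdBracket_inl hC, sdBracket_inr hC, zero_dotProduct,
    neg_dotProduct, dotProduct_apply_e, map_zero, LinearMap.zero_apply, Pi.zero_apply, neg_zero,
    add_zero, zero_add, sub_zero, neg_neg]
  case inl.inr.inr.inr => linear_combination -hO β γ δ α - hS (T (e β)) (T (e δ)) (e γ) α
  case inr.inl.inr.inr => linear_combination hO α γ δ β + hS (T (e γ)) (T (e α)) (e δ) β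
  case inr.inr.inl.inr => linear_combination -hO α β δ γ - hS (T (e δ)) (T (e β)) (e α) γ
  case inr.inr.inr.inl => linear_combination hO α β γ δ + hS (T (e α)) (T (e γ)) (e β) δ

end CYBE

theorem o_operator_iff_CYBE_solution_general (n : ℕ)
    (f : (Fin n → ℂ) →ₗ[ℂ] (Fin n → ℂ) →ₗ[ℂ] (Fin n → ℂ) →ₗ[ℂ] (Fin n → ℂ))
    (hskew1 : ∀ x y z, f x y z = - f y x z)
    (C : Fin n → Fin n → Fin n → Fin n → ℂ)
    (hC : ∀ i j k, f (e i) (e j) (e k) = ∑ t, C i j k t • e t)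
    (T : (Fin n → ℂ) →ₗ[ℂ] (Fin n → ℂ)) :
    (∀ x y z, f (T x) (T y) (T z) =
        T (f (T x) (T y) z + f (T y) (T z) x + f (T z) (T x) y)) ↔
    ((∀ p q : idx n, R T p q = - R T q p) ∧
     (∀ α β γ δ : idx n,
        (∑ i : idx n, ∑ j : idx n, ∑ k : idx n,
          R T i β * R T j γ * R T k δ * D C i j k α)
        + (∑ i : idx n, ∑ j : idx n, ∑ k : idx n,
          R T α i * R T j γ * R T k δ * D C i j k β)
        + (∑ i : idx n, ∑ j : idx n, ∑ k : idx n,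
          R T α i * R T β j * R T k δ * D C i j k γ)
        + (∑ i : idx n, ∑ j : idx n, ∑ k : idx n,
          R T α i * R T β j * R T γ k * D C i j k δ) = 0)) := by
  change IsOOperator f T ↔ (_ ∧ ∀ α β γ δ, cybeCoord C T α β γ δ = 0)
  rw [isOOperator_iff_oDefect_e]
  refine ⟨fun hT => ⟨R_skew T, cybeCoord_eq_zero T hskew1 hC hT⟩, fun ⟨_, hcybe⟩ a b c => ?_⟩
  funext t
  rw [← cybeCoord_inr_inr_inr_inl T hskew1 hC]
  exact hcybe _ _ _ _

/-- `T` is an `𝒪`-operator with respect to the adjoint representation iff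
`r = Σᵢ (eᵢ* ⊗ T eᵢ − T eᵢ ⊗ eᵢ*)` is a skew-symmetric solution of the 3-Lie classical
Yang–Baxter equation in the semidirect product `A ⋉_{ad*} A*`, expressed in coordinates. -/
theorem o_operator_iff_CYBE_solution (n : ℕ)
    (f : (Fin n → ℂ) →ₗ[ℂ] (Fin n → ℂ) →ₗ[ℂ] (Fin n → ℂ) →ₗ[ℂ] (Fin n → ℂ))
    (hskew1 : ∀ x y z, f x y z = - f y x z)
    (hskew2 : ∀ x y z, f x y z = - f x z y)
    (hFI : ∀ x1 x2 x3 x4 x5, f x1 x2 (f x3 x4 x5) =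
      f (f x1 x2 x3) x4 x5 + f x3 (f x1 x2 x4) x5 + f x3 x4 (f x1 x2 x5))
    (C : Fin n → Fin n → Fin n → Fin n → ℂ)
    (hC : ∀ i j k, f (e i) (e j) (e k) = ∑ t, C i j k t • e t)
    (T : (Fin n → ℂ) →ₗ[ℂ] (Fin n → ℂ)) :
    (∀ x y z, f (T x) (T y) (T z) =
        T (f (T x) (T y) z + f (T y) (T z) x + f (T z) (T x) y)) ↔
    ((∀ p q : idx n, R T p q = - R T q p) ∧
     (∀ α β γ δ : idx n,
        (∑ i : idx n, ∑ j : idx n, ∑ k : idx n,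
          R T i β * R T j γ * R T k δ * D C i j k α)
        + (∑ i : idx n, ∑ j : idx n, ∑ k : idx n,
          R T α i * R T j γ * R T k δ * D C i j k β)
        + (∑ i : idx n, ∑ j : idx n, ∑ k : idx n,
          R T α i * R T β j * R T k δ * D C i j k γ)
        + (∑ i : idx n, ∑ j : idx n, ∑ k : idx n,
          R T α i * R T β j * R T γ k * D C i j k δ) = 0)) :=
  o_operator_iff_CYBE_solution_general n f hskew1 C hC T
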